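/- arXiv:2209.09138 — 7 statements merged into one kernel-verified Lean document; each statement's English description precedes it below -/
import Mathlib

section
/- For every real D > 0, the function R_D(γ) = ln(1+γ) − D·√(1 − (1+γ)^{-2}) is strictly decreasing on the closed interval [0, v₀(D)], where v₀(D) = √((1 + √(1 + 4D²))/2) − 1. -/
/-- For `D > 0`, the function `R_D(γ) = ln(1+γ) − D·√(1 − (1+γ)⁻²)` is strictly decreasing
on `[0, v₀(D)]`, where `v₀(D) = √((1 + √(1 + 4D²))/2) − 1`. -/
theorem stmt_2 (D : ℝ) (hD : 0 < D) :
    StrictAntiOn (fun γ : ℝ => Real.log (1 + γ) - D * Real.sqrt (1 - ((1 + γ) ^ 2)⁻¹))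
      (Set.Icc 0 (Real.sqrt ((1 + Real.sqrt (1 + 4 * D ^ 2)) / 2) - 1)) := by
  obtain ⟨s, hs⟩ : ∃ s : ℝ, Real.sqrt (1 + 4 * D ^ 2) = s := ⟨_, rfl⟩
  have hs1 : 1 ≤ s := by
    rw [← hs]
    nlinarith [Real.sq_sqrt (by positivity : (0:ℝ) ≤ 1 + 4 * D ^ 2),
      Real.sqrt_nonneg (1 + 4 * D ^ 2)]
  have hs2 : s ^ 2 = 1 + 4 * D ^ 2 := by rw [← hs]; exact Real.sq_sqrt (by positivity)
  rw [hs]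
  apply strictAntiOn_of_deriv_neg (convex_Icc _ _)
  · -- continuity
    apply ContinuousOn.sub
    · apply ContinuousOn.log (by fun_prop)
      intro x hx
      have : (1:ℝ) ≤ 1 + x := by linarith [hx.1]
      linarith
    · apply ContinuousOn.mul continuousOn_const
      apply ContinuousOn.sqrt
      apply ContinuousOn.sub continuousOn_const
      apply ContinuousOn.inv₀ (by fun_prop)
      intro x hx
      have : (1:ℝ) ≤ 1 + x := by linarith [hx.1]
      positivity
  · intro x hx
    rw [interior_Icc] at hx
    obtain ⟨hx0, hx1⟩ := hx
    have ht0 : (0:ℝ) < 1 + x := by linarith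
    have ht2 : (1 + x) ^ 2 < (1 + s) / 2 := by
      have h1 : 1 + x < Real.sqrt ((1 + s) / 2) := by linarith
      nlinarith [Real.sq_sqrt (show (0:ℝ) ≤ (1 + s) / 2 by linarith),
        Real.sqrt_nonneg ((1 + s) / 2)]
    have ht21 : 1 < (1 + x) ^ 2 := by nlinarith
    have hgpos : 0 < 1 - ((1 + x) ^ 2)⁻¹ := by
      have : ((1 + x) ^ 2)⁻¹ < 1 := by
        rw [inv_lt_one_iff₀]; right; exact ht21
      linarith
    obtain ⟨w, hwdef⟩ : ∃ w : ℝ, Real.sqrt ((1 + x) ^ 2 - 1) = w := ⟨_, rfl⟩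
    have hw2 : w ^ 2 = (1 + x) ^ 2 - 1 := by
      rw [← hwdef]; exact Real.sq_sqrt (by linarith)
    have hw0 : 0 < w := by rw [← hwdef]; exact Real.sqrt_pos.mpr (by linarith)
    have hsq : Real.sqrt (1 - ((1 + x) ^ 2)⁻¹) = w / (1 + x) := by
      rw [show 1 - ((1 + x) ^ 2)⁻¹ = ((1 + x) ^ 2 - 1) / (1 + x) ^ 2 by field_simp,
        Real.sqrt_div (by linarith), Real.sqrt_sq ht0.le, hwdef]
    -- key inequality : (1+x) * w < D
    have key : (1 + x) * w < D := by
      have hlt : (1 + x) ^ 2 * ((1 + x) ^ 2 - 1) < D ^ 2 := by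
        have hp : 0 < ((1 + s) / 2 - (1 + x) ^ 2) * ((1 + x) ^ 2 + (s - 1) / 2) :=
          mul_pos (by linarith) (by nlinarith)
        nlinarith [hp]
      nlinarith [mul_pos ht0 hw0]
    -- derivative
    have hid : HasDerivAt (fun γ : ℝ => 1 + γ) 1 x := (hasDerivAt_id x).const_add 1
    have hpow : HasDerivAt (fun γ : ℝ => (1 + γ) ^ 2) ((2 : ℕ) * (1 + x) ^ (2 - 1) * 1) x :=
      hid.pow 2
    have hinv : HasDerivAt (fun γ : ℝ => ((1 + γ) ^ 2)⁻¹)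
        (-((2 : ℕ) * (1 + x) ^ (2 - 1) * 1) / ((1 + x) ^ 2) ^ 2) x := hpow.inv (by positivity)
    have hsub : HasDerivAt (fun γ : ℝ => 1 - ((1 + γ) ^ 2)⁻¹)
        (-(-((2 : ℕ) * (1 + x) ^ (2 - 1) * 1) / ((1 + x) ^ 2) ^ 2)) x := hinv.const_sub 1
    have hsqrt : HasDerivAt (fun γ : ℝ => Real.sqrt (1 - ((1 + γ) ^ 2)⁻¹))
        ((-(-((2 : ℕ) * (1 + x) ^ (2 - 1) * 1) / ((1 + x) ^ 2) ^ 2)) /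
          (2 * Real.sqrt (1 - ((1 + x) ^ 2)⁻¹))) x :=
      hsub.sqrt hgpos.ne'
    have hlog : HasDerivAt (fun γ : ℝ => Real.log (1 + γ)) (1 / (1 + x)) x := hid.log ht0.ne'
    have hf : HasDerivAt (fun γ : ℝ => Real.log (1 + γ) - D * Real.sqrt (1 - ((1 + γ) ^ 2)⁻¹)) _ x :=
      hlog.sub (hsqrt.const_mul D)
    rw [hf.deriv, hsq]
    have heq : 1 / (1 + x) -
        D * (-(-((2 : ℕ) * (1 + x) ^ (2 - 1) * 1) / ((1 + x) ^ 2) ^ 2) / (2 * (w / (1 + x))))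
        = 1 / (1 + x) - D / ((1 + x) ^ 2 * w) := by
      field_simp
      ring
    rw [heq]
    have : 1 / (1 + x) < D / ((1 + x) ^ 2 * w) := by
      rw [div_lt_div_iff₀ ht0 (by positivity)]
      nlinarith
    linarith
end

section
/- For every real D > 0, the function R_D(γ) = ln(1+γ) − D·√(1 − (1+γ)^{-2}) is strictly increasing on the interval [v₀(D), ∞), where v₀(D) = √((1 + √(1 + 4D²))/2) − 1. -/
/-- For `D > 0`, the function `R_D(γ) = ln(1+γ) − D·√(1 − (1+γ)⁻²)` is strictly increasing
on `[v₀(D), ∞)`, where `v₀(D) = √((1 + √(1 + 4D²))/2) − 1`. -/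
theorem stmt_3 (D : ℝ) (hD : 0 < D) :
    StrictMonoOn (fun γ : ℝ => Real.log (1 + γ) - D * Real.sqrt (1 - ((1 + γ) ^ 2)⁻¹))
      (Set.Ici (Real.sqrt ((1 + Real.sqrt (1 + 4 * D ^ 2)) / 2) - 1)) := by
  set q := Real.sqrt (1 + 4 * D ^ 2) with hqdef
  have hq2 : q ^ 2 = 1 + 4 * D ^ 2 := Real.sq_sqrt (by positivity)
  have hq1 : 1 < q := by nlinarith [Real.sqrt_nonneg (1 + 4 * D ^ 2)]
  set s := Real.sqrt ((1 + q) / 2) with hsdef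
  have hs2 : s ^ 2 = (1 + q) / 2 := Real.sq_sqrt (by linarith)
  have hs1 : 1 < s := by nlinarith [Real.sqrt_nonneg ((1 + q) / 2)]
  have hkey : s ^ 2 * (s ^ 2 - 1) = D ^ 2 := by
    rw [hs2]; nlinarith
  -- derivative at any point with 1 < 1 + γ
  have hder : ∀ γ : ℝ, 1 < 1 + γ →
      HasDerivAt (fun γ : ℝ => Real.log (1 + γ) - D * Real.sqrt (1 - ((1 + γ) ^ 2)⁻¹))
        (1 / (1 + γ) - D * ((2 * (1 + γ) / ((1 + γ) ^ 2) ^ 2) /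
          (2 * Real.sqrt (1 - ((1 + γ) ^ 2)⁻¹)))) γ := by
    intro γ hγ
    have hx0 : (0:ℝ) < 1 + γ := by linarith
    have hxne : (1 + γ) ≠ 0 := ne_of_gt hx0
    have hin : (0:ℝ) < 1 - ((1 + γ) ^ 2)⁻¹ := by
      have h1 : (1:ℝ) < (1 + γ) ^ 2 := by nlinarith
      have : ((1 + γ) ^ 2)⁻¹ < 1 := by
        rw [inv_lt_one_iff₀]; right; exact h1
      linarith
    have h1 : HasDerivAt (fun γ : ℝ => 1 + γ) 1 γ := (hasDerivAt_id γ).const_add 1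
    have hlog : HasDerivAt (fun γ : ℝ => Real.log (1 + γ)) (1 / (1 + γ)) γ := h1.log hxne
    have hpow : HasDerivAt (fun γ : ℝ => (1 + γ) ^ 2) (2 * (1 + γ)) γ := by
      have := h1.fun_pow 2
      simpa using this
    have hinv : HasDerivAt (fun γ : ℝ => ((1 + γ) ^ 2)⁻¹)
        (-(2 * (1 + γ)) / ((1 + γ) ^ 2) ^ 2) γ := hpow.inv (by positivity)
    have hsub : HasDerivAt (fun γ : ℝ => 1 - ((1 + γ) ^ 2)⁻¹)
        (2 * (1 + γ) / ((1 + γ) ^ 2) ^ 2) γ := by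
      have := hinv.const_sub 1
      rw [neg_div, neg_neg] at this
      exact this
    have hsq : HasDerivAt (fun γ : ℝ => Real.sqrt (1 - ((1 + γ) ^ 2)⁻¹))
        ((2 * (1 + γ) / ((1 + γ) ^ 2) ^ 2) / (2 * Real.sqrt (1 - ((1 + γ) ^ 2)⁻¹))) γ :=
      hsub.sqrt (ne_of_gt hin)
    exact hlog.sub (hsq.const_mul D)
  apply strictMonoOn_of_deriv_pos (convex_Ici _)
  · -- continuity
    intro γ hγ
    have hγ' : 1 < 1 + γ := by
      simp only [Set.mem_Ici] at hγ; linarith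
    exact ((hder γ hγ').continuousAt).continuousWithinAt
  · intro γ hγ
    rw [interior_Ici, Set.mem_Ioi] at hγ
    have hxs : s < 1 + γ := by linarith
    have hγ' : 1 < 1 + γ := lt_trans hs1 hxs
    set x := 1 + γ with hxdef
    have hx0 : (0:ℝ) < x := by linarith
    have hin : (0:ℝ) < 1 - (x ^ 2)⁻¹ := by
      have h1 : (1:ℝ) < x ^ 2 := by nlinarith
      have : (x ^ 2)⁻¹ < 1 := by
        rw [inv_lt_one_iff₀]; right; exact h1
      linarith
    set u := Real.sqrt (1 - (x ^ 2)⁻¹) with hudef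
    have hu0 : 0 < u := Real.sqrt_pos.mpr hin
    have hu2 : u ^ 2 = 1 - (x ^ 2)⁻¹ := Real.sq_sqrt (le_of_lt hin)
    rw [(hder γ hγ').deriv]
    have hxu2 : (x ^ 2 * u) ^ 2 = x ^ 4 - x ^ 2 := by
      have : (x ^ 2 * u) ^ 2 = x ^ 4 * u ^ 2 := by ring
      rw [this, hu2]
      field_simp
    have hDlt : D < x ^ 2 * u := by
      have hsq : D ^ 2 < (x ^ 2 * u) ^ 2 := by
        rw [hxu2]
        have hx2 : s ^ 2 < x ^ 2 := by nlinarith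
        nlinarith [mul_pos (sub_pos.mpr hx2) (show (0:ℝ) < x ^ 2 + s ^ 2 - 1 by nlinarith)]
      exact lt_of_pow_lt_pow_left₀ 2 (by positivity) hsq
    have heq : 1 / x - D * ((2 * x / (x ^ 2) ^ 2) / (2 * u)) = (x ^ 2 * u - D) / (x ^ 3 * u) := by
      field_simp
    rw [heq]
    apply div_pos (by linarith) (by positivity)
end

section
/- For every real D > 0, the function R_D(γ) = ln(1+γ) − D·√(1 − (1+γ)^{-2}) satisfies R_D(0) = 0 and R_D(v₀(D)) ≤ 0, where v₀(D) = √((1 + √(1 + 4D²))/2) − 1. -/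
/-- For `D > 0`, the function `R_D(γ) = ln(1+γ) − D·√(1 − (1+γ)⁻²)` satisfies `R_D(0) = 0`
and `R_D(v₀(D)) ≤ 0`, where `v₀(D) = √((1 + √(1 + 4D²))/2) − 1`. -/
theorem stmt_4 (D : ℝ) (hD : 0 < D) :
    (fun γ : ℝ => Real.log (1 + γ) - D * Real.sqrt (1 - ((1 + γ) ^ 2)⁻¹)) 0 = 0 ∧
    (fun γ : ℝ => Real.log (1 + γ) - D * Real.sqrt (1 - ((1 + γ) ^ 2)⁻¹))
      (Real.sqrt ((1 + Real.sqrt (1 + 4 * D ^ 2)) / 2) - 1) ≤ 0 := by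
  constructor
  · simp
  · simp only [add_sub_cancel]
    set t := Real.sqrt (1 + 4 * D ^ 2) with htdef
    have ht2 : t ^ 2 = 1 + 4 * D ^ 2 := Real.sq_sqrt (by nlinarith)
    have ht0 : 0 ≤ t := Real.sqrt_nonneg _
    have ht1 : 1 ≤ t := by nlinarith
    have hhalf : (0:ℝ) ≤ (1 + t) / 2 := by linarith
    have hs2 : Real.sqrt ((1 + t) / 2) ^ 2 = (1 + t) / 2 := Real.sq_sqrt hhalf
    have hlog : Real.log (Real.sqrt ((1 + t) / 2)) = Real.log ((1 + t) / 2) / 2 :=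
      Real.log_sqrt hhalf
    have hinner : 1 - (Real.sqrt ((1 + t) / 2) ^ 2)⁻¹ = (t - 1) / (t + 1) := by
      rw [hs2]
      field_simp
      ring
    have hDs : D * Real.sqrt (1 - (Real.sqrt ((1 + t) / 2) ^ 2)⁻¹) = (t - 1) / 2 := by
      rw [hinner, show D * Real.sqrt ((t - 1) / (t + 1)) =
        Real.sqrt (D ^ 2 * ((t - 1) / (t + 1))) by
          rw [Real.sqrt_mul (by positivity), Real.sqrt_sq hD.le]]
      rw [show D ^ 2 * ((t - 1) / (t + 1)) = ((t - 1) / 2) ^ 2 by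
          field_simp; nlinarith]
      exact Real.sqrt_sq (by linarith)
    rw [hDs, hlog]
    have hlb : Real.log ((1 + t) / 2) ≤ (1 + t) / 2 - 1 :=
      Real.log_le_sub_one_of_pos (by linarith)
    linarith
end

section
/- For every real D > 0 and every target rate r ≥ 0, there exists a unique a ≥ v₀(D) such that R_D(a) = r, where v₀(D) = √((1 + √(1 + 4D²))/2) − 1. -/
noncomputable def gD (D : ℝ) : ℝ → ℝ := fun x => Real.log x - D * Real.sqrt (1 - (x ^ 2)⁻¹)

lemma hasDerivAt_gD (D : ℝ) {x : ℝ} (hx : 1 < x) :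
    HasDerivAt (gD D)
      (1 / x - D * ((2 / x ^ 3) * (1 / (2 * Real.sqrt (1 - (x ^ 2)⁻¹))))) x := by
  have hx0 : x ≠ 0 := by linarith
  have hupos : 0 < 1 - (x ^ 2)⁻¹ := by
    have : (x ^ 2)⁻¹ < 1 := by
      rw [inv_lt_one_iff₀]; right; nlinarith
    linarith
  have h1 : HasDerivAt (fun x : ℝ => x ^ 2) (2 * x) x := by
    simpa using hasDerivAt_pow 2 x
  have h2 := h1.inv (pow_ne_zero 2 hx0)
  have hu : HasDerivAt (fun x : ℝ => 1 - (x ^ 2)⁻¹) (2 / x ^ 3) x := by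
    have := (hasDerivAt_const x (1:ℝ)).sub h2
    refine this.congr_deriv ?_
    field_simp; ring
  have hsq := (Real.hasDerivAt_sqrt hupos.ne').comp x hu
  have := (Real.hasDerivAt_log hx0).sub (hsq.const_mul D)
  refine this.congr_deriv ?_
  ring

lemma continuousOn_gD (D : ℝ) : ContinuousOn (gD D) (Set.Ici 1) := by
  apply ContinuousOn.sub
  · exact Real.continuousOn_log.mono (by
      intro x hx
      simp only [Set.mem_compl_iff, Set.mem_singleton_iff]
      have : (1:ℝ) ≤ x := hx
      intro h; rw [h] at this; linarith)
  · apply continuousOn_const.mul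
    apply Real.continuous_sqrt.comp_continuousOn
    apply continuousOn_const.sub
    apply ContinuousOn.inv₀ (continuous_pow 2).continuousOn
    intro x hx
    have : (1:ℝ) ≤ x := hx
    positivity

set_option maxHeartbeats 1000000 in
/-- For every `D > 0` and every target rate `r ≥ 0`, there exists a unique `a ≥ v₀(D)`
such that `R_D(a) = r`, where `v₀(D) = √((1 + √(1 + 4D²))/2) − 1`. -/
theorem stmt_6 (D : ℝ) (hD : 0 < D) (r : ℝ) (hr : 0 ≤ r) :
    ∃! a : ℝ, Real.sqrt ((1 + Real.sqrt (1 + 4 * D ^ 2)) / 2) - 1 ≤ a ∧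
      Real.log (1 + a) - D * Real.sqrt (1 - ((1 + a) ^ 2)⁻¹) = r := by
  set s := Real.sqrt (1 + 4 * D ^ 2) with hs
  have hs2 : s ^ 2 = 1 + 4 * D ^ 2 := Real.sq_sqrt (by positivity)
  have hs1 : 1 < s := by nlinarith [Real.sqrt_nonneg (1 + 4 * D ^ 2)]
  set x0 := Real.sqrt ((1 + s) / 2) with hx0def
  have hx0sq : x0 ^ 2 = (1 + s) / 2 := Real.sq_sqrt (by linarith)
  have hx01 : 1 < x0 := by nlinarith [Real.sqrt_nonneg ((1 + s) / 2)]
  have hD2 : x0 ^ 2 * (x0 ^ 2 - 1) = D ^ 2 := by rw [hx0sq]; nlinarith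
  -- sign of derivative
  have hderiv_pos : ∀ x ∈ interior (Set.Ici x0), 0 < deriv (gD D) x := by
    intro x hx
    rw [interior_Ici, Set.mem_Ioi] at hx
    have hx1 : 1 < x := lt_trans hx01 hx
    have hupos : 0 < 1 - (x ^ 2)⁻¹ := by
      have : (x ^ 2)⁻¹ < 1 := by rw [inv_lt_one_iff₀]; right; nlinarith
      linarith
    set w := Real.sqrt (1 - (x ^ 2)⁻¹) with hw
    have hwpos : 0 < w := Real.sqrt_pos.mpr hupos
    have hwsq : w ^ 2 = 1 - (x ^ 2)⁻¹ := Real.sq_sqrt hupos.le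
    rw [(hasDerivAt_gD D hx1).deriv]
    have hx0' : (0:ℝ) < x := by linarith
    have key : D < x ^ 2 * w := by
      have h2 : D ^ 2 < (x ^ 2 * w) ^ 2 := by
        have : (x ^ 2 * w) ^ 2 = x ^ 4 - x ^ 2 := by
          have hxne : x ≠ 0 := hx0'.ne'
          rw [mul_pow, hwsq]
          field_simp
        rw [this]
        have hxx : x0 ^ 2 < x ^ 2 := by nlinarith
        have hpos : (0:ℝ) < x ^ 2 + x0 ^ 2 - 1 := by nlinarith
        nlinarith [mul_pos (sub_pos.mpr hxx) hpos]
      exact lt_of_pow_lt_pow_left₀ 2 (by positivity) h2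
    have heq : 1 / x - D * ((2 / x ^ 3) * (1 / (2 * w))) = (x ^ 2 * w - D) / (x ^ 3 * w) := by
      field_simp
    rw [heq]
    apply div_pos (by linarith) (by positivity)
  have hderiv_neg : ∀ x ∈ interior (Set.Icc 1 x0), deriv (gD D) x < 0 := by
    intro x hx
    rw [interior_Icc, Set.mem_Ioo] at hx
    obtain ⟨hx1, hxlt⟩ := hx
    have hupos : 0 < 1 - (x ^ 2)⁻¹ := by
      have : (x ^ 2)⁻¹ < 1 := by rw [inv_lt_one_iff₀]; right; nlinarith
      linarith
    set w := Real.sqrt (1 - (x ^ 2)⁻¹) with hw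
    have hwpos : 0 < w := Real.sqrt_pos.mpr hupos
    have hwsq : w ^ 2 = 1 - (x ^ 2)⁻¹ := Real.sq_sqrt hupos.le
    rw [(hasDerivAt_gD D hx1).deriv]
    have hx0' : (0:ℝ) < x := by linarith
    have key : x ^ 2 * w < D := by
      have h2 : (x ^ 2 * w) ^ 2 < D ^ 2 := by
        have : (x ^ 2 * w) ^ 2 = x ^ 4 - x ^ 2 := by
          have hxne : x ≠ 0 := hx0'.ne'
          rw [mul_pow, hwsq]
          field_simp
        rw [this]
        have hxx : x ^ 2 < x0 ^ 2 := by nlinarith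
        have hpos : (0:ℝ) < x ^ 2 + x0 ^ 2 - 1 := by nlinarith
        nlinarith [mul_pos (sub_pos.mpr hxx) hpos]
      exact lt_of_pow_lt_pow_left₀ 2 hD.le h2
    have heq : 1 / x - D * ((2 / x ^ 3) * (1 / (2 * w))) = (x ^ 2 * w - D) / (x ^ 3 * w) := by
      field_simp
    rw [heq]
    exact div_neg_of_neg_of_pos (by linarith) (by positivity)
  have hmono : StrictMonoOn (gD D) (Set.Ici x0) :=
    strictMonoOn_of_deriv_pos (convex_Ici x0)
      ((continuousOn_gD D).mono (Set.Ici_subset_Ici.mpr hx01.le)) hderiv_pos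
  have hanti : StrictAntiOn (gD D) (Set.Icc 1 x0) :=
    strictAntiOn_of_deriv_neg (convex_Icc 1 x0)
      ((continuousOn_gD D).mono (fun x hx => hx.1)) hderiv_neg
  have hg1 : gD D 1 = 0 := by simp [gD]
  have hgx0 : gD D x0 < 0 := by
    have := hanti (Set.left_mem_Icc.mpr hx01.le) (Set.right_mem_Icc.mpr hx01.le) hx01
    rw [hg1] at this
    exact this
  -- pick b large
  set b := max x0 (Real.exp (r + D)) with hb
  have hx0b : x0 ≤ b := le_max_left _ _
  have hb1 : 1 < b := lt_of_lt_of_le hx01 hx0b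
  have hgb : r ≤ gD D b := by
    have hlog : r + D ≤ Real.log b := by
      rw [← Real.log_exp (r + D)]
      exact Real.log_le_log (Real.exp_pos _) (le_max_right _ _)
    have hsqrt : Real.sqrt (1 - (b ^ 2)⁻¹) ≤ 1 := by
      calc Real.sqrt (1 - (b ^ 2)⁻¹) ≤ Real.sqrt 1 := by
            apply Real.sqrt_le_sqrt
            have : 0 < (b ^ 2)⁻¹ := by positivity
            linarith
        _ = 1 := Real.sqrt_one
    have : D * Real.sqrt (1 - (b ^ 2)⁻¹) ≤ D := by nlinarith [Real.sqrt_nonneg (1 - (b ^ 2)⁻¹)]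
    simp only [gD]
    linarith
  -- IVT on [x0, b]
  have hivt := intermediate_value_Icc hx0b
    ((continuousOn_gD D).mono (fun x hx => le_trans hx01.le hx.1))
  have hrmem : r ∈ Set.Icc (gD D x0) (gD D b) := ⟨by linarith, hgb⟩
  obtain ⟨c, hc, hgc⟩ := hivt hrmem
  refine ⟨c - 1, ⟨by linarith [hc.1], ?_⟩, ?_⟩
  · have : 1 + (c - 1) = c := by ring
    rw [this]
    exact hgc
  · intro y hy
    obtain ⟨hy1, hy2⟩ := hy
    have h1y : 1 + y ∈ Set.Ici x0 := by simp; linarith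
    have h1c : 1 + (c - 1) ∈ Set.Ici x0 := by simp; linarith [hc.1]
    have : gD D (1 + y) = gD D (1 + (c - 1)) := by
      show Real.log (1 + y) - _ = _
      rw [hy2, show 1 + (c - 1) = c by ring]
      exact hgc.symm
    have := hmono.injOn h1y h1c this
    linarith
end

section
/- (Proposition 1, constraint equivalence.) Let D > 0, let r > 0 be a target rate, and let a ≥ v₀(D) be the unique point with R_D(a) = r, where v₀(D) = √((1 + √(1 + 4D²))/2) − 1. Then for every γ ≥ 0, the rate constraint r ≤ R_D(γ) holds if and only if the SINR constraint a ≤ γ holds. -/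
private lemma stmt_7_aux1 (D s x x₀ : ℝ) (hs2 : s ^ 2 = 1 + 4 * D ^ 2) (hs1 : 1 < s)
    (hx02 : x₀ ^ 2 = (1 + s) / 2) (hx0nn : 0 ≤ x₀) (hx : x₀ < x) :
    D ^ 2 < x ^ 4 - x ^ 2 := by
  have h2 : x₀ ^ 2 < x ^ 2 := by nlinarith [mul_pos (sub_pos.2 hx) (by linarith : (0:ℝ) < x + x₀)]
  nlinarith [mul_pos (by nlinarith : (0:ℝ) < x ^ 2 - (1 + s) / 2)
    (by nlinarith : (0:ℝ) < x ^ 2 + (s - 1) / 2)]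

private lemma stmt_7_aux2 (D s x x₀ : ℝ) (hs2 : s ^ 2 = 1 + 4 * D ^ 2) (hs1 : 1 < s)
    (hx02 : x₀ ^ 2 = (1 + s) / 2) (hx1 : 1 < x) (hx : x < x₀) :
    x ^ 4 - x ^ 2 < D ^ 2 := by
  have h2 : x ^ 2 < x₀ ^ 2 := by nlinarith [mul_pos (sub_pos.2 hx) (by linarith : (0:ℝ) < x + x₀)]
  nlinarith [mul_pos (by nlinarith : (0:ℝ) < (1 + s) / 2 - x ^ 2)
    (by nlinarith : (0:ℝ) < x ^ 2 + (s - 1) / 2)]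

private lemma stmt_7_aux3 (D y : ℝ) (hD : 0 ≤ D) (hy : 0 < y) (h : D ^ 2 < y ^ 2) : D < y := by
  nlinarith

private lemma stmt_7_aux4 (D y : ℝ) (hD : 0 < D) (hy : 0 ≤ y) (h : y ^ 2 ≤ D ^ 2) : y ≤ D := by
  nlinarith

/-- Proposition 1 (constraint equivalence). Let `D > 0`, `r > 0`, and let
`a ≥ v₀(D) = √((1 + √(1 + 4D²))/2) − 1` satisfy `R_D(a) = r`. Then for every `γ ≥ 0`,
`r ≤ R_D(γ)` iff `a ≤ γ`. -/
theorem stmt_7 (D : ℝ) (hD : 0 < D) (r : ℝ) (hr : 0 < r) (a : ℝ)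
    (ha : Real.sqrt ((1 + Real.sqrt (1 + 4 * D ^ 2)) / 2) - 1 ≤ a)
    (haR : Real.log (1 + a) - D * Real.sqrt (1 - ((1 + a) ^ 2)⁻¹) = r) :
    ∀ γ : ℝ, 0 ≤ γ →
      (r ≤ Real.log (1 + γ) - D * Real.sqrt (1 - ((1 + γ) ^ 2)⁻¹) ↔ a ≤ γ) := by
  set s := Real.sqrt (1 + 4 * D ^ 2) with hs_def
  set x₀ := Real.sqrt ((1 + s) / 2) with hx0_def
  set g : ℝ → ℝ := fun y => Real.log y - D * Real.sqrt (1 - (y ^ 2)⁻¹) with hg_def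
  have hs2 : s ^ 2 = 1 + 4 * D ^ 2 := Real.sq_sqrt (by positivity)
  have hs0 : 0 ≤ s := Real.sqrt_nonneg _
  have hs1 : 1 < s := by nlinarith
  have hx0nn : 0 ≤ x₀ := Real.sqrt_nonneg _
  have hx02 : x₀ ^ 2 = (1 + s) / 2 := Real.sq_sqrt (by positivity)
  have hx01 : 1 < x₀ := by nlinarith
  -- derivative of g at x > 1
  have hderiv : ∀ x : ℝ, 1 < x →
      HasDerivAt g
        (x⁻¹ - D * (-(-(↑2 * x ^ 1) / (x ^ 2) ^ 2) / (2 * Real.sqrt (1 - (x ^ 2)⁻¹)))) x := by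
    intro x hx
    have hx0 : (0:ℝ) < x := by linarith
    have hx2 : x ^ 2 ≠ 0 := by positivity
    have hu : (0:ℝ) < 1 - (x ^ 2)⁻¹ := by
      have h1 : (x ^ 2)⁻¹ < 1 := inv_lt_one_of_one_lt₀ (by nlinarith)
      linarith
    have h1 : HasDerivAt (fun y : ℝ => (y ^ 2)⁻¹) (-(↑2 * x ^ 1) / (x ^ 2) ^ 2) x :=
      (hasDerivAt_pow 2 x).inv hx2
    have h2 : HasDerivAt (fun y : ℝ => 1 - (y ^ 2)⁻¹) (-(-(↑2 * x ^ 1) / (x ^ 2) ^ 2)) x :=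
      h1.const_sub 1
    have h3 := h2.sqrt (ne_of_gt hu)
    exact (Real.hasDerivAt_log (ne_of_gt hx0)).sub (h3.const_mul D)
  have husq : ∀ x : ℝ, 1 < x → Real.sqrt (1 - (x ^ 2)⁻¹) ^ 2 = 1 - (x ^ 2)⁻¹ := by
    intro x hx
    refine Real.sq_sqrt ?_
    have h1 : (x ^ 2)⁻¹ < 1 := inv_lt_one_of_one_lt₀ (by nlinarith)
    linarith
  have hupos : ∀ x : ℝ, 1 < x → 0 < Real.sqrt (1 - (x ^ 2)⁻¹) := by
    intro x hx
    refine Real.sqrt_pos.2 ?_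
    have h1 : (x ^ 2)⁻¹ < 1 := inv_lt_one_of_one_lt₀ (by nlinarith)
    linarith
  have hdsimp : ∀ x : ℝ, 1 < x →
      x⁻¹ - D * (-(-(↑2 * x ^ 1) / (x ^ 2) ^ 2) / (2 * Real.sqrt (1 - (x ^ 2)⁻¹)))
        = x⁻¹ - D / (Real.sqrt (1 - (x ^ 2)⁻¹) * x ^ 3) := by
    intro x hx
    have hx0 : (0:ℝ) < x := by linarith
    have ht := hupos x hx
    have h1 : -(-(↑2 * x ^ 1) / (x ^ 2) ^ 2) = 2 / x ^ 3 := by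
      field_simp
    rw [h1, div_div]
    have h2 : 2 / (x ^ 3 * (2 * Real.sqrt (1 - (x ^ 2)⁻¹)))
        = 1 / (Real.sqrt (1 - (x ^ 2)⁻¹) * x ^ 3) := by
      rw [div_eq_div_iff (by positivity) (by positivity)]; ring
    rw [h2, mul_one_div]
  have hcont : ContinuousOn g (Set.Ici 1) := by
    apply ContinuousOn.sub
    · exact Real.continuousOn_log.mono (by
        intro x hx
        have : (1:ℝ) ≤ x := hx
        simp only [Set.mem_compl_iff, Set.mem_singleton_iff]
        intro h; rw [h] at this; linarith)
    · apply ContinuousOn.mul continuousOn_const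
      apply Real.continuous_sqrt.comp_continuousOn
      apply ContinuousOn.sub continuousOn_const
      apply ContinuousOn.inv₀ (continuousOn_pow 2)
      intro x hx
      have : (1:ℝ) ≤ x := hx
      positivity
  -- strict monotonicity on [x₀, ∞)
  have hmono : StrictMonoOn g (Set.Ici x₀) := by
    apply strictMonoOn_of_deriv_pos (convex_Ici x₀)
      (hcont.mono (Set.Ici_subset_Ici.2 (le_of_lt hx01)))
    intro x hx
    rw [interior_Ici] at hx
    have hxgt : x₀ < x := hx
    have hx1 : 1 < x := lt_trans hx01 hxgt
    have hx0' : (0:ℝ) < x := by linarith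
    rw [(hderiv x hx1).deriv, hdsimp x hx1]
    set t := Real.sqrt (1 - (x ^ 2)⁻¹) with ht_def
    have ht2 : t ^ 2 = 1 - (x ^ 2)⁻¹ := husq x hx1
    have ht0 : 0 < t := hupos x hx1
    have hkey : D ^ 2 < x ^ 4 - x ^ 2 := stmt_7_aux1 D s x x₀ hs2 hs1 hx02 hx0nn hxgt
    have htx : (t * x ^ 2) ^ 2 = x ^ 4 - x ^ 2 := by
      have : (t * x ^ 2) ^ 2 = t ^ 2 * x ^ 4 := by ring
      rw [this, ht2]; field_simp
    have hD2 : D < t * x ^ 2 :=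
      stmt_7_aux3 D (t * x ^ 2) (le_of_lt hD) (by positivity) (by rw [htx]; exact hkey)
    rw [sub_pos, div_lt_iff₀ (by positivity)]
    have h3 : x⁻¹ * (t * x ^ 3) = t * x ^ 2 := by field_simp
    rw [h3]
    exact hD2
  -- antitone on [1, x₀]
  have hanti : AntitoneOn g (Set.Icc 1 x₀) := by
    refine antitoneOn_of_deriv_nonpos (convex_Icc 1 x₀)
      (hcont.mono (fun x hx => hx.1)) ?_ ?_
    · intro x hx
      rw [interior_Icc] at hx
      exact ((hderiv x hx.1).differentiableAt).differentiableWithinAt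
    intro x hx
    rw [interior_Icc] at hx
    have hx1 : 1 < x := hx.1
    have hxlt : x < x₀ := hx.2
    have hx0' : (0:ℝ) < x := by linarith
    rw [(hderiv x hx1).deriv, hdsimp x hx1]
    set t := Real.sqrt (1 - (x ^ 2)⁻¹) with ht_def
    have ht2 : t ^ 2 = 1 - (x ^ 2)⁻¹ := husq x hx1
    have ht0 : 0 < t := hupos x hx1
    have hkey : x ^ 4 - x ^ 2 < D ^ 2 := stmt_7_aux2 D s x x₀ hs2 hs1 hx02 hx1 hxlt
    have htx : (t * x ^ 2) ^ 2 = x ^ 4 - x ^ 2 := by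
      have : (t * x ^ 2) ^ 2 = t ^ 2 * x ^ 4 := by ring
      rw [this, ht2]; field_simp
    have hD2 : t * x ^ 2 ≤ D :=
      stmt_7_aux4 D (t * x ^ 2) hD (by positivity) (by rw [htx]; exact le_of_lt hkey)
    rw [sub_nonpos, le_div_iff₀ (by positivity)]
    have h3 : x⁻¹ * (t * x ^ 3) = t * x ^ 2 := by field_simp
    rw [h3]
    exact hD2
  have hg1 : g 1 = 0 := by simp [hg_def]
  have hax : x₀ ≤ 1 + a := by linarith
  have hga : g (1 + a) = r := haR
  intro γ hγ
  have hγ1 : (1:ℝ) ≤ 1 + γ := by linarith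
  constructor
  · intro hrle
    by_contra hlt
    push_neg at hlt
    rcases lt_or_ge (1 + γ) x₀ with hcase | hcase
    · have h1 : g (1 + γ) ≤ g 1 :=
        hanti (Set.mem_Icc.2 ⟨le_refl 1, le_of_lt hx01⟩)
          (Set.mem_Icc.2 ⟨hγ1, le_of_lt hcase⟩) hγ1
      rw [hg1] at h1
      have h2 : r ≤ g (1 + γ) := hrle
      linarith
    · have h1 : g (1 + γ) < g (1 + a) :=
        hmono (Set.mem_Ici.2 hcase) (Set.mem_Ici.2 hax) (by linarith)
      rw [hga] at h1
      have h2 : r ≤ g (1 + γ) := hrle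
      linarith
  · intro hle
    have h1 : g (1 + a) ≤ g (1 + γ) :=
      hmono.monotoneOn (Set.mem_Ici.2 hax) (Set.mem_Ici.2 (by linarith)) (by linarith)
    rw [hga] at h1
    exact h1
end

section
/- The channel dispersion root function g(β) = √(1 − (1+β)^{-2}) is concave on the interval [0, ∞). -/
open Set

private lemma concave_comp_aux {s t : Set ℝ} {f g : ℝ → ℝ} (hg : ConcaveOn ℝ t g)
    (hf : ConcaveOn ℝ s f) (hst : f '' s ⊆ t) (hg' : MonotoneOn g t) :
    ConcaveOn ℝ s (g ∘ f) :=
  ⟨hf.1, fun _ hx _ hy _ _ ha hb hab =>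
    (hg.2 (hst (mem_image_of_mem f hx)) (hst (mem_image_of_mem f hy)) ha hb hab).trans <|
      hg' (hg.1 (hst (mem_image_of_mem f hx)) (hst (mem_image_of_mem f hy)) ha hb hab)
        (hst (mem_image_of_mem f (hf.1 hx hy ha hb hab))) (hf.2 hx hy ha hb hab)⟩

private lemma hd1 : ∀ x ∈ Set.Ioi (-1 : ℝ),
    HasDerivAt (fun β : ℝ => 1 - ((1 + β) ^ 2)⁻¹) (2 / (1 + x) ^ 3) x := by
  intro x hx
  have hne : (1 + x) ≠ 0 := by simp only [Set.mem_Ioi] at hx; linarith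
  have h1 : HasDerivAt (fun β : ℝ => 1 + β) 1 x := (hasDerivAt_id x).const_add 1
  have h2 := h1.pow 2
  have h3 := h2.inv (pow_ne_zero 2 hne)
  have h4 := h3.const_sub 1
  convert h4 using 1
  · rfl
  · rfl
  · rfl
  simp only [Pi.pow_apply]
  field_simp
  ring

private lemma hd2 : ∀ x ∈ Set.Ioi (-1 : ℝ),
    HasDerivAt (fun x : ℝ => 2 / (1 + x) ^ 3) (-6 / (1 + x) ^ 4) x := by
  intro x hx
  have hne : (1 + x) ≠ 0 := by simp only [Set.mem_Ioi] at hx; linarith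
  have h1 : HasDerivAt (fun β : ℝ => 1 + β) 1 x := (hasDerivAt_id x).const_add 1
  have h3 := ((h1.pow 3).inv (pow_ne_zero 3 hne)).const_mul (2 : ℝ)
  have heq : (fun x : ℝ => 2 / (1 + x) ^ 3) = fun x : ℝ => 2 * ((1 + x) ^ 3)⁻¹ := by
    funext y; rw [div_eq_mul_inv]
  rw [heq]
  convert h3 using 1
  · rfl
  · rfl
  · rfl
  simp only [Pi.pow_apply]
  field_simp
  ring

private lemma h_concave :
    ConcaveOn ℝ (Set.Ici (0 : ℝ)) (fun β : ℝ => 1 - ((1 + β) ^ 2)⁻¹) := by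
  have hsub : Set.Ici (0 : ℝ) ⊆ Set.Ioi (-1 : ℝ) := fun x hx => by
    simp only [Set.mem_Ici] at hx; simp only [Set.mem_Ioi]; linarith
  have hderiv : ∀ x ∈ Set.Ioi (-1 : ℝ),
      deriv (fun β : ℝ => 1 - ((1 + β) ^ 2)⁻¹) x = 2 / (1 + x) ^ 3 :=
    fun x hx => (hd1 x hx).deriv
  refine concaveOn_of_deriv2_nonpos (convex_Ici 0)
    (fun x hx => (hd1 x (hsub hx)).continuousAt.continuousWithinAt) ?_ ?_ ?_
  · intro x hx
    rw [interior_Ici] at hx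
    exact (hd1 x (hsub (Set.mem_Ici.mpr (le_of_lt (Set.mem_Ioi.mp hx))))).differentiableAt.differentiableWithinAt
  · intro x hx
    rw [interior_Ici] at hx
    have hx' : x ∈ Set.Ioi (-1 : ℝ) := hsub (Set.mem_Ici.mpr (le_of_lt (Set.mem_Ioi.mp hx)))
    have hev : deriv (fun β : ℝ => 1 - ((1 + β) ^ 2)⁻¹) =ᶠ[nhds x]
        (fun x : ℝ => 2 / (1 + x) ^ 3) :=
      Filter.eventuallyEq_of_mem (isOpen_Ioi.mem_nhds hx') hderiv
    exact (((hd2 x hx').congr_of_eventuallyEq hev)).differentiableAt.differentiableWithinAt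
  · intro x hx
    rw [interior_Ici] at hx
    have hx' : x ∈ Set.Ioi (-1 : ℝ) := hsub (Set.mem_Ici.mpr (le_of_lt (Set.mem_Ioi.mp hx)))
    have hev : deriv (fun β : ℝ => 1 - ((1 + β) ^ 2)⁻¹) =ᶠ[nhds x]
        (fun x : ℝ => 2 / (1 + x) ^ 3) :=
      Filter.eventuallyEq_of_mem (isOpen_Ioi.mem_nhds hx') hderiv
    have := ((hd2 x hx').congr_of_eventuallyEq hev).deriv
    simp only [Function.iterate_succ, Function.iterate_zero, Function.comp_apply, id_eq]
    rw [this]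
    have hx0 : (0 : ℝ) < 1 + x := by simp only [Set.mem_Ioi] at hx'; linarith
    have h4 : (0 : ℝ) < (1 + x) ^ 4 := by positivity
    have : (-6 : ℝ) / (1 + x) ^ 4 ≤ 0 :=
      div_nonpos_of_nonpos_of_nonneg (by norm_num) (le_of_lt h4)
    linarith

/-- The channel dispersion root function `g(β) = √(1 − (1+β)⁻²)` is concave on `[0, ∞)`. -/
theorem stmt_8 :
    ConcaveOn ℝ (Set.Ici (0 : ℝ))
      (fun β : ℝ => Real.sqrt (1 - ((1 + β) ^ 2)⁻¹)) := by
  have hmono : MonotoneOn Real.sqrt (Set.Ici (0 : ℝ)) :=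
    Monotone.monotoneOn (fun a b h => Real.sqrt_le_sqrt h) _
  have himg : (fun β : ℝ => 1 - ((1 + β) ^ 2)⁻¹) '' Set.Ici (0 : ℝ) ⊆ Set.Ici (0 : ℝ) := by
    rintro y ⟨x, hx, rfl⟩
    simp only [Set.mem_Ici] at hx ⊢
    have h1 : (1 : ℝ) ≤ (1 + x) ^ 2 := by nlinarith
    have h2 : ((1 + x) ^ 2)⁻¹ ≤ 1 := inv_le_one_of_one_le₀ h1
    linarith
  exact concave_comp_aux Real.strictConcaveOn_sqrt.concaveOn h_concave himg hmono
end

section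
/- (S-Procedure conversion of the infinite robust signal-power constraint into an LMI, eq. (23).) Let ĥ ∈ ℂ^M, let δ > 0 and t ∈ ℝ, and let W be an M×M complex positive semidefinite Hermitian matrix. Then the infinite family of constraints ‘for every Δ ∈ ℂ^M with ‖Δ‖ ≤ δ, t ≤ (ĥ+Δ)ᴴ W (ĥ+Δ)’ holds if and only if there exists λ ≥ 0 such that the (M+1)×(M+1) Hermitian block matrix Γ = [[λ·I_M + W, W·ĥ], [(W·ĥ)ᴴ, ĥᴴ·W·ĥ − λ·δ² − t]] is positive semidefinite. -/
open scoped ComplexOrder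
open Matrix

lemma cross_herm {M : ℕ} {V : Matrix (Fin M) (Fin M) ℂ} (hV : Vᴴ = V) (x d : Fin M → ℂ) :
    star d ⬝ᵥ V *ᵥ x = (starRingEnd ℂ) (star x ⬝ᵥ V *ᵥ d) := by
  have h1 : star (star x ⬝ᵥ V *ᵥ d) = star (V *ᵥ d) ⬝ᵥ star (star x) := by
    rw [star_dotProduct_star]
  rw [show (starRingEnd ℂ) (star x ⬝ᵥ V *ᵥ d) = star (star x ⬝ᵥ V *ᵥ d) from rfl, h1,
    star_star, star_mulVec, ← dotProduct_mulVec, hV]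

lemma expand_re {M : ℕ} {V : Matrix (Fin M) (Fin M) ℂ} (hV : Vᴴ = V) (x d : Fin M → ℂ) (θ : ℝ) :
    (star (x + (θ:ℂ) • d) ⬝ᵥ V *ᵥ (x + (θ:ℂ) • d)).re
      = (star x ⬝ᵥ V *ᵥ x).re + 2*θ*(star x ⬝ᵥ V *ᵥ d).re + θ^2 * (star d ⬝ᵥ V *ᵥ d).re := by
  have h1 : star (x + (θ:ℂ) • d) = star x + (θ:ℂ) • star d := by
    rw [star_add, star_smul]
    simp [Complex.star_def, Complex.conj_ofReal]
  rw [h1, Matrix.mulVec_add, Matrix.mulVec_smul]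
  simp only [add_dotProduct, dotProduct_add, smul_dotProduct,
    dotProduct_smul, smul_eq_mul]
  rw [cross_herm hV x d]
  simp only [Complex.add_re, Complex.mul_re, Complex.ofReal_re,
    Complex.ofReal_im, Complex.conj_re, Complex.conj_im]
  ring

lemma dot_self_eq {M : ℕ} (x : Fin M → ℂ) :
    star x ⬝ᵥ x = ((‖(WithLp.equiv 2 (Fin M → ℂ)).symm x‖^2 : ℝ) : ℂ) := by
  rw [dotProduct_comm, ← EuclideanSpace.inner_toLp_toLp (𝕜 := ℂ) x x, inner_self_eq_norm_sq_to_K]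
  norm_cast

lemma block_quad {M : ℕ} {W : Matrix (Fin M) (Fin M) ℂ} (hV : Wᴴ = W)
    (hvec : Fin M → ℂ) (c : ℂ) (lam : ℝ) (z : Fin M → ℂ) (s : ℂ) :
    star (Sum.elim z (fun _ : Unit => s)) ⬝ᵥ
      (Matrix.fromBlocks ((lam : ℂ) • (1 : Matrix (Fin M) (Fin M) ℂ) + W)
        (Matrix.of fun i (_ : Unit) => (W *ᵥ hvec) i)
        (Matrix.of fun (_ : Unit) j => star ((W *ᵥ hvec) j))
        (Matrix.of fun (_ : Unit) (_ : Unit) => star hvec ⬝ᵥ W *ᵥ hvec - c)) *ᵥ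
      (Sum.elim z (fun _ : Unit => s)) =
    (lam:ℂ) * (star z ⬝ᵥ z) - c * (star s * s)
      + star (z + s • hvec) ⬝ᵥ W *ᵥ (z + s • hvec) := by
  have e1 : (Sum.elim z (fun _ : Unit => s)) ∘ Sum.inl = z := rfl
  have e2 : (Sum.elim z (fun _ : Unit => s)) ∘ Sum.inr = fun _ : Unit => s := rfl
  rw [Matrix.fromBlocks_mulVec, e1, e2, Function.star_sumElim,
    sumElim_dotProduct_sumElim]
  have hB : (Matrix.of fun i (_ : Unit) => (W *ᵥ hvec) i) *ᵥ (fun _ : Unit => s)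
      = s • (W *ᵥ hvec) := by
    funext i; simp [Matrix.mulVec, dotProduct, mul_comm]
  have hC : (Matrix.of fun (_ : Unit) j => star ((W *ᵥ hvec) j)) *ᵥ z
      = fun _ : Unit => star (W *ᵥ hvec) ⬝ᵥ z := rfl
  have hD : (Matrix.of fun (_ : Unit) (_ : Unit) => star hvec ⬝ᵥ W *ᵥ hvec - c)
      *ᵥ (fun _ : Unit => s) = fun _ : Unit => (star hvec ⬝ᵥ W *ᵥ hvec - c) * s := by
    funext u; simp [Matrix.mulVec, dotProduct]
  have hcross : star (W *ᵥ hvec) ⬝ᵥ z = star hvec ⬝ᵥ W *ᵥ z := by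
    rw [star_mulVec, ← dotProduct_mulVec, hV]
  have hstarz : star (z + s • hvec) = star z + star s • star hvec := by
    rw [star_add, star_smul]
  rw [hB, hC, hD, Matrix.add_mulVec, Matrix.smul_mulVec, Matrix.one_mulVec,
    hstarz, Matrix.mulVec_add, Matrix.mulVec_smul]
  simp only [dotProduct_add, add_dotProduct, smul_dotProduct,
    dotProduct_smul, smul_eq_mul, hcross]
  have hunit : ∀ y : Unit → ℂ, star (fun _ : Unit => s) ⬝ᵥ y = star s * y () := by
    intro y; simp [dotProduct]
  simp only [hunit]
  ring

set_option maxHeartbeats 2000000 in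
/-- S-Procedure conversion of the infinite robust signal-power constraint into an LMI
(eq. (23)): for a channel estimate `ĥ`, an uncertainty radius `δ > 0`, a threshold `t`,
and a PSD Hermitian matrix `W`, the constraint
`∀ Δ, ‖Δ‖ ≤ δ → t ≤ (ĥ+Δ)ᴴ W (ĥ+Δ)` holds iff there exists `λ ≥ 0` such that the
`(M+1)×(M+1)` Hermitian block matrix
`Γ = [[λ·I + W, W·ĥ], [(W·ĥ)ᴴ, ĥᴴWĥ − λδ² − t]]` is positive semidefinite. -/
theorem stmt_15 (M : ℕ) (hHat : EuclideanSpace ℂ (Fin M)) (δ : ℝ) (hδ : 0 < δ) (t : ℝ)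
    (W : Matrix (Fin M) (Fin M) ℂ) (hW : W.PosSemidef) :
    (∀ Δ : EuclideanSpace ℂ (Fin M), ‖Δ‖ ≤ δ →
        t ≤ (dotProduct (star fun i => (hHat + Δ) i)
              (W.mulVec fun i => (hHat + Δ) i)).re) ↔
      ∃ lam : ℝ, 0 ≤ lam ∧
        (Matrix.fromBlocks
          ((lam : ℂ) • (1 : Matrix (Fin M) (Fin M) ℂ) + W)
          (Matrix.of fun i (_ : Unit) => W.mulVec (fun j => hHat j) i)
          (Matrix.of fun (_ : Unit) j => star (W.mulVec (fun k => hHat k) j))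
          (Matrix.of fun (_ : Unit) (_ : Unit) =>
            dotProduct (star fun i => hHat i) (W.mulVec fun i => hHat i)
              - ((lam * δ ^ 2 + t : ℝ) : ℂ))).PosSemidef := by
  have hermW : Wᴴ = W := hW.1
  set hv : Fin M → ℂ := fun i => hHat i with hhv
  -- real value and nonnegativity of the W-quadratic form
  have hQr : ∀ x : Fin M → ℂ,
      star x ⬝ᵥ W *ᵥ x = (((star x ⬝ᵥ W *ᵥ x).re : ℝ) : ℂ) := by
    intro x
    have h := hW.dotProduct_mulVec_nonneg x
    rw [Complex.le_def] at h
    apply Complex.ext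
    · simp
    · simp [← h.2]
  have hQnn : ∀ x : Fin M → ℂ, 0 ≤ (star x ⬝ᵥ W *ᵥ x).re := by
    intro x
    have h := hW.dotProduct_mulVec_nonneg x
    rw [Complex.le_def] at h
    simpa using h.1
  -- the real quadratic function q
  set q : EuclideanSpace ℂ (Fin M) → ℝ := fun Δ =>
    (dotProduct (star fun i => (hHat + Δ) i)
      (W.mulVec fun i => (hHat + Δ) i)).re with hq
  -- bridging vectors
  have hvec_mix : ∀ (Δ₁ Δ₂ : EuclideanSpace ℂ (Fin M)) (θ : ℝ),
      (fun i => (hHat + (Δ₁ + θ • (Δ₂ - Δ₁))) i)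
        = (hv + fun i => Δ₁ i) + (θ:ℂ) • ((fun i => Δ₂ i) - fun i => Δ₁ i) := by
    intro Δ₁ Δ₂ θ
    funext i
    show hHat i + (Δ₁ i + θ • (Δ₂ i - Δ₁ i))
        = (hHat i + Δ₁ i) + (θ:ℂ) * (Δ₂ i - Δ₁ i)
    rw [Complex.real_smul]
    ring
  have hvec2 : ∀ (Δ₂ : EuclideanSpace ℂ (Fin M)) (Δ₁ : EuclideanSpace ℂ (Fin M)),
      (fun i => (hHat + Δ₂) i)
        = (hv + fun i => Δ₁ i) + ((fun i => Δ₂ i) - fun i => Δ₁ i) := by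
    intro Δ₂ Δ₁; funext i
    show hHat i + Δ₂ i = (hHat i + Δ₁ i) + (Δ₂ i - Δ₁ i)
    ring
  have hnorm_eq : ∀ Δ : EuclideanSpace ℂ (Fin M),
      star (fun i => Δ i) ⬝ᵥ (fun i => Δ i) = ((‖Δ‖^2 : ℝ) : ℂ) :=
    fun Δ => dot_self_eq (fun i => Δ i)
  have hnre : ∀ Δ : EuclideanSpace ℂ (Fin M),
      (star (fun i => Δ i) ⬝ᵥ (fun i => Δ i)).re = ‖Δ‖^2 := by
    intro Δ; rw [hnorm_eq]; exact Complex.ofReal_re _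
  -- general mixed expansion
  have mix_exp : ∀ (V : Matrix (Fin M) (Fin M) ℂ), Vᴴ = V → ∀ (x dd : Fin M → ℂ) (θ : ℝ),
      (star (x + (θ:ℂ) • dd) ⬝ᵥ V *ᵥ (x + (θ:ℂ) • dd)).re
        = (1-θ) * (star x ⬝ᵥ V *ᵥ x).re + θ * (star (x+dd) ⬝ᵥ V *ᵥ (x+dd)).re
          - θ*(1-θ) * (star dd ⬝ᵥ V *ᵥ dd).re := by
    intro V hV x dd θ
    have h1 := expand_re hV x dd θ
    have h2 := expand_re hV x dd 1
    rw [Complex.ofReal_one, one_smul] at h2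
    rw [h1, h2]
    ring
  -- q expansion along segments
  have qexp : ∀ (Δ₁ Δ₂ : EuclideanSpace ℂ (Fin M)) (θ : ℝ),
      q (Δ₁ + θ • (Δ₂ - Δ₁)) = (1-θ) * q Δ₁ + θ * q Δ₂
        - θ*(1-θ) * (star ((fun i => Δ₂ i) - fun i => Δ₁ i) ⬝ᵥ
            W *ᵥ ((fun i => Δ₂ i) - fun i => Δ₁ i)).re := by
    intro Δ₁ Δ₂ θ
    have e0 : (fun i => (hHat + Δ₁) i) = hv + fun i => Δ₁ i := rfl
    simp only [hq]
    rw [hvec_mix Δ₁ Δ₂ θ, hvec2 Δ₂ Δ₁, e0]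
    exact mix_exp W hermW _ _ θ
  -- norm expansion along segments
  have nexp : ∀ (Δ₁ Δ₂ : EuclideanSpace ℂ (Fin M)) (θ : ℝ),
      ‖Δ₁ + θ • (Δ₂ - Δ₁)‖^2 = (1-θ)*‖Δ₁‖^2 + θ*‖Δ₂‖^2 - θ*(1-θ)*‖Δ₂ - Δ₁‖^2 := by
    intro Δ₁ Δ₂ θ
    have h := mix_exp 1 (by simp) (fun i => Δ₁ i) ((fun i => Δ₂ i) - fun i => Δ₁ i) θ
    simp only [Matrix.one_mulVec] at h
    have b1 : (fun i => (Δ₁ + θ • (Δ₂ - Δ₁)) i)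
        = (fun i => Δ₁ i) + (θ:ℂ) • ((fun i => Δ₂ i) - fun i => Δ₁ i) := by
      funext i
      show Δ₁ i + θ • (Δ₂ i - Δ₁ i) = Δ₁ i + (θ:ℂ) * (Δ₂ i - Δ₁ i)
      rw [Complex.real_smul]
    have b2 : (fun i => Δ₁ i) + ((fun i => Δ₂ i) - fun i => Δ₁ i) = (fun i => Δ₂ i) := by
      funext i; show Δ₁ i + (Δ₂ i - Δ₁ i) = Δ₂ i; ring
    have b3 : ((fun i => Δ₂ i) - fun i => Δ₁ i) = (fun i => (Δ₂ - Δ₁) i) := rfl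
    rw [b2] at h
    rw [← b1, b3] at h
    simp only [hnre] at h
    linarith [h]
  constructor
  · intro hyp
    -- convexity cross inequality
    have crossineq : ∀ (Δ₁ Δ₂ : EuclideanSpace ℂ (Fin M)), ‖Δ₁‖ < δ → δ < ‖Δ₂‖ →
        (t - q Δ₂) * (δ^2 - ‖Δ₁‖^2) ≤ (q Δ₁ - t) * (‖Δ₂‖^2 - δ^2) := by
      intro Δ₁ Δ₂ h1 h2
      have hn1 : ‖Δ₁‖^2 < δ^2 := by nlinarith [norm_nonneg Δ₁]
      have hn2 : δ^2 < ‖Δ₂‖^2 := by nlinarith [norm_nonneg Δ₂]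
      have ha : t ≤ q Δ₁ := hyp Δ₁ h1.le
      rcases le_or_gt (q Δ₂) t with hb | hb
      swap
      · nlinarith
      have hc : Continuous fun θ : ℝ => ‖Δ₁ + θ • (Δ₂ - Δ₁)‖ :=
        (continuous_const.add (continuous_id.smul continuous_const)).norm
      obtain ⟨θ, hθm, hθ⟩ : ∃ θ ∈ Set.Icc (0:ℝ) 1, ‖Δ₁ + θ • (Δ₂ - Δ₁)‖ = δ := by
        have hiv := intermediate_value_Icc (by norm_num : (0:ℝ) ≤ 1) hc.continuousOn
        have hmem : δ ∈ Set.Icc (‖Δ₁ + (0:ℝ) • (Δ₂ - Δ₁)‖) (‖Δ₁ + (1:ℝ) • (Δ₂ - Δ₁)‖) := by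
          have hadd : Δ₁ + (Δ₂ - Δ₁) = Δ₂ := by abel
          constructor
          · simpa using h1.le
          · simp only [one_smul, hadd]
            exact h2.le
        obtain ⟨θ, hθ, e⟩ := hiv hmem
        exact ⟨θ, hθ, e⟩
      obtain ⟨hθ0, hθ1⟩ := hθm
      have hθlt : θ < 1 := by
        rcases lt_or_eq_of_le hθ1 with h | h
        · exact h
        · exfalso
          have hadd : Δ₁ + (Δ₂ - Δ₁) = Δ₂ := by abel
          rw [h, one_smul, hadd] at hθ
          linarith
      have hqm : t ≤ q (Δ₁ + θ • (Δ₂ - Δ₁)) := hyp _ hθ.le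
      have hC := hQnn ((fun i => Δ₂ i) - fun i => Δ₁ i)
      have hD := sq_nonneg ‖Δ₂ - Δ₁‖
      have e1 := qexp Δ₁ Δ₂ θ
      have e2 := nexp Δ₁ Δ₂ θ
      rw [hθ] at e2
      have h1θ : 0 < 1 - θ := by linarith
      have k1 : θ * (t - q Δ₂) ≤ (1-θ) * (q Δ₁ - t) := by
        nlinarith [mul_nonneg (mul_nonneg hθ0 h1θ.le) hC]
      have k2 : (1-θ) * (δ^2 - ‖Δ₁‖^2) ≤ θ * (‖Δ₂‖^2 - δ^2) := by
        nlinarith [mul_nonneg (mul_nonneg hθ0 h1θ.le) hD]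
      nlinarith [mul_le_mul_of_nonneg_left k2 (sub_nonneg.mpr hb),
        mul_le_mul_of_nonneg_left k1 (by linarith : (0:ℝ) ≤ ‖Δ₂‖^2 - δ^2), h1θ]
    -- the set of required lower bounds for lambda
    set S : Set ℝ :=
      {r | ∃ Δ : EuclideanSpace ℂ (Fin M), δ < ‖Δ‖ ∧ r = (t - q Δ) / (‖Δ‖^2 - δ^2)} with hS
    have hq00 : t ≤ q 0 := hyp 0 (by simpa using hδ.le)
    have hub : ∀ r ∈ S, r ≤ (q 0 - t) / δ^2 := by
      rintro r ⟨Δ, hΔ, rfl⟩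
      have hn2 : 0 < ‖Δ‖^2 - δ^2 := by nlinarith [norm_nonneg Δ]
      have hcr := crossineq 0 Δ (by simpa using hδ) hΔ
      rw [div_le_div_iff₀ hn2 (by positivity)]
      simp only [norm_zero] at hcr
      nlinarith [hcr]
    have hbdd : BddAbove (insert 0 S) := by
      refine ⟨max 0 ((q 0 - t)/δ^2), ?_⟩
      rintro r (rfl | hr)
      · exact le_max_left _ _
      · exact le_trans (hub r hr) (le_max_right _ _)
    set lam := sSup (insert 0 S) with hlamdef
    have hlam0 : 0 ≤ lam := le_csSup hbdd (Set.mem_insert _ _)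
    have hlam_ub : ∀ Δ : EuclideanSpace ℂ (Fin M), δ < ‖Δ‖ →
        (t - q Δ)/(‖Δ‖^2 - δ^2) ≤ lam := fun Δ h =>
      le_csSup hbdd (Set.mem_insert_of_mem _ ⟨Δ, h, rfl⟩)
    have hlam_le : ∀ Δ : EuclideanSpace ℂ (Fin M), ‖Δ‖ < δ →
        lam ≤ (q Δ - t)/(δ^2 - ‖Δ‖^2) := by
      intro Δ₁ h1
      apply csSup_le (Set.insert_nonempty _ _)
      rintro r (rfl | ⟨Δ₂, h2, rfl⟩)
      · have hts : t ≤ q Δ₁ := hyp Δ₁ h1.le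
        apply div_nonneg (by linarith) (by nlinarith [norm_nonneg Δ₁])
      · have hcr := crossineq Δ₁ Δ₂ h1 h2
        rw [div_le_div_iff₀ (by nlinarith [norm_nonneg Δ₂]) (by nlinarith [norm_nonneg Δ₁])]
        nlinarith [hcr]
    have hkey : ∀ Δ : EuclideanSpace ℂ (Fin M), t ≤ q Δ + lam * (‖Δ‖^2 - δ^2) := by
      intro Δ
      rcases lt_trichotomy ‖Δ‖ δ with h | h | h
      · have hl := hlam_le Δ h
        have hp : 0 < δ^2 - ‖Δ‖^2 := by nlinarith [norm_nonneg Δ]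
        rw [le_div_iff₀ hp] at hl
        nlinarith [hl]
      · have hts := hyp Δ h.le
        have : q Δ + lam * (‖Δ‖^2 - δ^2) = q Δ := by rw [h]; ring
        rw [this]
        exact hts
      · have hl := hlam_ub Δ h
        have hp : 0 < ‖Δ‖^2 - δ^2 := by nlinarith [norm_nonneg Δ]
        rw [div_le_iff₀ hp] at hl
        nlinarith [hl]
    refine ⟨lam, hlam0, Matrix.posSemidef_iff_dotProduct_mulVec.mpr ⟨?_, ?_⟩⟩
    · -- Hermitian
      show _ = _
      rw [Matrix.fromBlocks_conjTranspose]
      have hA : ((lam:ℂ) • (1:Matrix (Fin M) (Fin M) ℂ) + W)ᴴ = (lam:ℂ) • 1 + W := by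
        rw [Matrix.conjTranspose_add, Matrix.conjTranspose_smul, Matrix.conjTranspose_one,
          hermW, Complex.star_def, Complex.conj_ofReal]
      have hBC : (Matrix.of fun i (_ : Unit) => (W *ᵥ hv) i)ᴴ
          = Matrix.of fun (_ : Unit) j => star ((W *ᵥ hv) j) := by
        ext u j; simp [Matrix.conjTranspose_apply]
      have hCB : (Matrix.of fun (_ : Unit) j => star ((W *ᵥ hv) j))ᴴ
          = Matrix.of fun i (_ : Unit) => (W *ᵥ hv) i := by
        ext i u; simp [Matrix.conjTranspose_apply]
      have hDD : (Matrix.of fun (_ : Unit) (_ : Unit) =>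
            star hv ⬝ᵥ W *ᵥ hv - ((lam * δ ^ 2 + t : ℝ) : ℂ))ᴴ
          = Matrix.of fun (_ : Unit) (_ : Unit) =>
            star hv ⬝ᵥ W *ᵥ hv - ((lam * δ ^ 2 + t : ℝ) : ℂ) := by
        ext u u'
        simp only [Matrix.conjTranspose_apply, Matrix.of_apply, star_sub]
        rw [hQr hv]
        simp [Complex.star_def, Complex.conj_ofReal]
      rw [hA, hBC, hCB, hDD]
    · -- quadratic form nonneg
      intro v
      have hv_eq : v = Sum.elim (fun i => v (Sum.inl i)) (fun _ : Unit => v (Sum.inr ())) := by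
        funext j
        rcases j with i | u
        · rfl
        · cases u; rfl
      rw [hv_eq, block_quad hermW hv (((lam * δ ^ 2 + t : ℝ) : ℂ)) lam _ _]
      set z : Fin M → ℂ := fun i => v (Sum.inl i) with hzdef
      set s : ℂ := v (Sum.inr ()) with hsdef
      have hss : star s * s = ((‖s‖^2 : ℝ) : ℂ) := by
        rw [Complex.star_def, mul_comm, Complex.mul_conj, Complex.normSq_eq_norm_sq]
      have hreal : (lam:ℂ) * (star z ⬝ᵥ z) - ((lam * δ ^ 2 + t : ℝ) : ℂ) * (star s * s)
            + star (z + s • hv) ⬝ᵥ W *ᵥ (z + s • hv)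
          = (((lam * ‖(WithLp.equiv 2 (Fin M → ℂ)).symm z‖^2 - (lam * δ ^ 2 + t) * ‖s‖^2
              + (star (z + s • hv) ⬝ᵥ W *ᵥ (z + s • hv)).re : ℝ)) : ℂ) := by
        rw [dot_self_eq z, hss, hQr (z + s • hv), Complex.ofReal_re]
        push_cast
        ring
      rw [hreal, Complex.zero_le_real]
      by_cases hs : s = 0
      · have hz0 : z + s • hv = z := by rw [hs, zero_smul, add_zero]
        rw [hz0, hs]
        simp only [norm_zero]
        nlinarith [hQnn z, mul_nonneg hlam0 (sq_nonneg ‖(WithLp.equiv 2 (Fin M → ℂ)).symm z‖)]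
      · set Δ : EuclideanSpace ℂ (Fin M) := (WithLp.equiv 2 (Fin M → ℂ)).symm (s⁻¹ • z)
          with hΔdef
        have hzΔ : z + s • hv = s • (fun i => (hHat + Δ) i) := by
          funext i
          show z i + s * hHat i = s * (hHat i + s⁻¹ * z i)
          rw [mul_add, mul_inv_cancel_left₀ hs]
          ring
        have hQs : (star (z + s • hv) ⬝ᵥ W *ᵥ (z + s • hv)).re = ‖s‖^2 * q Δ := by
          rw [hzΔ]
          have hsc : star (s • (fun i => (hHat + Δ) i)) ⬝ᵥ W *ᵥ (s • fun i => (hHat + Δ) i)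
              = (star s * s) * ((star fun i => (hHat + Δ) i) ⬝ᵥ W *ᵥ fun i => (hHat + Δ) i) := by
            rw [star_smul, Matrix.mulVec_smul, smul_dotProduct, dotProduct_smul,
              smul_eq_mul, smul_eq_mul]
            ring
          rw [hsc, hss]
          simp only [hq]
          rw [Complex.re_ofReal_mul]
        have hzn : ‖(WithLp.equiv 2 (Fin M → ℂ)).symm z‖^2 = ‖s‖^2 * ‖Δ‖^2 := by
          have hzs : (WithLp.equiv 2 (Fin M → ℂ)).symm z = s • Δ := by
            ext i
            show z i = s * (s⁻¹ * z i)
            rw [mul_inv_cancel_left₀ hs]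
          rw [hzs, norm_smul, mul_pow]
        rw [hQs, hzn]
        have hk := hkey Δ
        have hs2 : 0 < ‖s‖^2 := pow_pos (norm_pos_iff.mpr hs) 2
        nlinarith [mul_le_mul_of_nonneg_left hk hs2.le]
  · rintro ⟨lam, hlam0, hG⟩ Δ hΔ
    have h2 := hG.dotProduct_mulVec_nonneg (Sum.elim (fun i => Δ i) (fun _ : Unit => (1:ℂ)))
    rw [block_quad hermW hv (((lam * δ ^ 2 + t : ℝ) : ℂ)) lam _ _] at h2
    have e1 : (fun i => Δ i) + (1:ℂ) • hv = (fun i => (hHat + Δ) i) := by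
      funext i
      show Δ i + 1 * hHat i = hHat i + Δ i
      ring
    have hnn : (WithLp.equiv 2 (Fin M → ℂ)).symm (fun i => Δ i) = Δ := rfl
    rw [e1, dot_self_eq, hnn, hQr] at h2
    simp only [star_one, mul_one] at h2
    have hcast : (lam:ℂ) * ((‖Δ‖^2 : ℝ) : ℂ) - ((lam * δ ^ 2 + t : ℝ) : ℂ)
          + ((((star fun i => (hHat + Δ) i) ⬝ᵥ W *ᵥ fun i => (hHat + Δ) i).re : ℝ) : ℂ)
        = ((lam * ‖Δ‖^2 - (lam * δ ^ 2 + t) + q Δ : ℝ) : ℂ) := by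
      push_cast
      ring
    rw [hcast, Complex.zero_le_real] at h2
    have hn : ‖Δ‖^2 ≤ δ^2 := by nlinarith [norm_nonneg Δ]
    show t ≤ q Δ
    nlinarith [h2, mul_nonneg hlam0 (sub_nonneg.mpr hn)]
end
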